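/- Let R be a reflexive binary relation on S = {1,...,n}, let x̄ be a minimal vector for f_R on the standard simplex, and suppose α, β ∈ S are twins (i.e., r_{αs} = r_{βs} for all s ∈ S \ {α,β}) with r_{αβ} ≤ 1. Then x_α = x_β. -/

import Mathlib

open Finset
open scoped Classical

/-- The quadratic form `f_R(x) = Σ_{i,j} R(i,j) x_i x_j` of a binary relation. -/
noncomputable def quadForm {ι : Type*} [Fintype ι] (R : ι → ι → Prop) (x : ι → ℝ) : ℝ :=
  ∑ i, ∑ j, (if R i j then (1 : ℝ) else 0) * x i * x j

noncomputable def rSym {ι : Type*} (R : ι → ι → Prop) (i j : ι) : ℝ :=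
  (if R i j then (1 : ℝ) else 0) + (if R j i then (1 : ℝ) else 0)

/-!
Moving mass `t` from `β` to `α` changes `f_R` by `(2 - r_{αβ}) (t (x_α - x_β) + t²)`: the
linear term is `Σ_s (r_{αs} - r_{βs}) x_s`, in which the twin condition kills every `s ≠ α, β`,
and reflexivity gives `r_{αα} = r_{ββ} = 2`. Replacing `x_α, x_β` by their mean therefore
lowers `f_R` by `(2 - r_{αβ}) (x_α - x_β)² / 4`, and `2 - r_{αβ} ≥ 1`, so minimality forces
`x_α = x_β`.
-/

open Matrix

section RelationQuadForm

variable {ι : Type*} [Fintype ι] (R : ι → ι → Prop)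

noncomputable def relMatrix : Matrix ι ι ℝ := Matrix.of fun i j => if R i j then 1 else 0

omit [Fintype ι] in
lemma relMatrix_add_transpose_apply (i j : ι) :
    relMatrix R i j + relMatrix R j i = rSym R i j := rfl

lemma quadForm_eq_dotProduct_mulVec (x : ι → ℝ) :
    quadForm R x = x ⬝ᵥ (relMatrix R *ᵥ x) := by
  simp only [quadForm, dotProduct, mulVec, relMatrix, of_apply, Finset.mul_sum]
  exact Finset.sum_congr rfl fun i _ => Finset.sum_congr rfl fun j _ => by ring

lemma quadForm_add_smul (x d : ι → ℝ) (t : ℝ) :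
    quadForm R (x + t • d) = quadForm R x
      + t * (x ⬝ᵥ (relMatrix R *ᵥ d) + d ⬝ᵥ (relMatrix R *ᵥ x)) + t ^ 2 * quadForm R d := by
  simp only [quadForm_eq_dotProduct_mulVec, mulVec_add, mulVec_smul, dotProduct_add,
    add_dotProduct, dotProduct_smul, smul_dotProduct, smul_eq_mul]
  ring

variable {R} in
lemma sum_rSym_sub_mul_of_twins (hrefl : ∀ i, R i i) {α β : ι} (hαβ : α ≠ β)
    (htwin : ∀ s, s ≠ α → s ≠ β → rSym R α s = rSym R β s) (x : ι → ℝ) :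
    ∑ s, (rSym R α s - rSym R β s) * x s = (2 - rSym R α β) * (x α - x β) := by
  rw [Fintype.sum_eq_add α β hαβ fun s hs => by rw [htwin s hs.1 hs.2, sub_self, zero_mul]]
  simp only [rSym, if_pos (hrefl _)]
  ring

variable [DecidableEq ι]

lemma relMatrix_polar_single_sub_single (x : ι → ℝ) (α β : ι) :
    x ⬝ᵥ (relMatrix R *ᵥ (Pi.single α 1 - Pi.single β 1))
      + (Pi.single α 1 - Pi.single β 1) ⬝ᵥ (relMatrix R *ᵥ x)
      = ∑ s, (rSym R α s - rSym R β s) * x s := by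
  rw [mulVec_sub, mulVec_single_one, mulVec_single_one, sub_dotProduct, single_one_dotProduct,
    single_one_dotProduct]
  simp only [mulVec, dotProduct, Pi.sub_apply, col_apply, ← relMatrix_add_transpose_apply,
    ← Finset.sum_sub_distrib, ← Finset.sum_add_distrib]
  exact Finset.sum_congr rfl fun s _ => by ring

lemma quadForm_single_sub_single (α β : ι) :
    quadForm R (Pi.single α 1 - Pi.single β 1)
      = relMatrix R α α + relMatrix R β β - rSym R α β := by
  simp only [quadForm_eq_dotProduct_mulVec, mulVec_sub, mulVec_single_one, sub_dotProduct,
    dotProduct_sub, single_one_dotProduct, col_apply, ← relMatrix_add_transpose_apply]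
  ring

variable {R} in
lemma quadForm_add_smul_single_sub_single_of_twins (hrefl : ∀ i, R i i) {α β : ι} (hαβ : α ≠ β)
    (htwin : ∀ s, s ≠ α → s ≠ β → rSym R α s = rSym R β s) (x : ι → ℝ) (t : ℝ) :
    quadForm R (x + t • (Pi.single α 1 - Pi.single β 1))
      = quadForm R x + (2 - rSym R α β) * (t * (x α - x β) + t ^ 2) := by
  rw [quadForm_add_smul, relMatrix_polar_single_sub_single, sum_rSym_sub_mul_of_twins hrefl hαβ htwin,
    quadForm_single_sub_single]
  simp only [relMatrix, of_apply, if_pos (hrefl _)]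
  ring

end RelationQuadForm

lemma add_smul_single_sub_single_mem_stdSimplex {𝕜 ι : Type*} [Field 𝕜] [LinearOrder 𝕜]
    [IsStrictOrderedRing 𝕜] [Fintype ι] [DecidableEq ι] {x : ι → 𝕜} (hx : x ∈ stdSimplex 𝕜 ι)
    {α β : ι} {t : 𝕜} (hα : -x α ≤ t) (hβ : t ≤ x β) :
    x + t • (Pi.single α 1 - Pi.single β 1) ∈ stdSimplex 𝕜 ι := by
  refine ⟨fun s => ?_, ?_⟩
  · simp only [Pi.add_apply, Pi.smul_apply, Pi.sub_apply, Pi.single_apply, smul_eq_mul]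
    split_ifs with hsα hsβ hsβ <;> subst_vars <;> linarith [hx.1 s]
  · simp [Finset.sum_add_distrib, ← Finset.mul_sum, hx.2]

/-- Lemma 2: if `α, β` are twins with `r_{αβ} ≤ 1`, then any minimal vector
has `x α = x β`. -/
theorem stmt4 (n : ℕ) (R : Fin n → Fin n → Prop) (hrefl : ∀ i, R i i)
    (x : Fin n → ℝ) (hx : x ∈ stdSimplex ℝ (Fin n))
    (hmin : ∀ y ∈ stdSimplex ℝ (Fin n), quadForm R x ≤ quadForm R y)
    (α β : Fin n)
    (htwin : ∀ s, s ≠ α → s ≠ β → rSym R α s = rSym R β s)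
    (hab : rSym R α β ≤ 1) :
    x α = x β := by
  rcases eq_or_ne α β with rfl | hαβ
  · rfl
  have hmean : x + ((x β - x α) / 2) • (Pi.single α 1 - Pi.single β 1) ∈ stdSimplex ℝ (Fin n) :=
    add_smul_single_sub_single_mem_stdSimplex hx (by linarith [hx.1 α, hx.1 β])
      (by linarith [hx.1 α, hx.1 β])
  have hle := hmin _ hmean
  rw [quadForm_add_smul_single_sub_single_of_twins hrefl hαβ htwin] at hle
  have hsq : (x α - x β) ^ 2 ≤ 0 := by nlinarith
  exact sub_eq_zero.mp (pow_eq_zero_iff two_ne_zero |>.mp (le_antisymm hsq (sq_nonneg _)))
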